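/- arXiv:1601.01190 — 2 statements merged into one kernel-verified Lean document; each statement's English description precedes it below -/
import Mathlib

section
/- (Lemma on the number of 'bad' rounds for a suboptimal arm, deterministic part) Let f, g, h be functions with f(T) → ∞, g(s) → 0, h(s)/s → 0 as s,T → ∞, with g and s ↦ h(s)/s non-increasing for large s. Let μ_a < μ₁ and d⁺(x,y) = d(x,y)·1{x<y}. Then for all ε > 0 there exists N(ε) such that for T ≥ N(ε), ∑_{s=1}^T P(s·d⁺(μ̂_{a,s}, μ₁ - g(s)) ≤ f(T) + h(s)) ≤ (1+ε)f(T)/d(μ_a,μ₁) + O(√f(T)) + O(1), where μ̂_{a,s} is the empirical mean of s i.i.d. samples from ν^{μ_a} and the O-terms depend only on ε, the divergence d, and the variance bound V_a = sup_{μ∈[μ_a,μ₁]} V(μ). -/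
/-!
In natural coordinates `d x y` is the Bregman divergence of the strictly convex cumulant `b`
between `binv x` and `binv y`; hence it shrinks as `x` and `y` move towards each other, and it is
continuous. Shrinking `[μa, μ1]` slightly to `[x, y]` keeps `d x y > d μa μ1 / (1 + ε)`. Once
`g s` and `h s / s` are small, in every round `s > (1 + ε) f T / d μa μ1` the event
`s d⁺(μ̂ₛ, μ1 - g s) ≤ f T + h s` forces `μ̂ₛ ≤ μ₀m` or `μ̂ₛ ≥ x`, whose probabilities decay
geometrically in `s` by the Chernoff bounds. The earlier rounds contribute at most their number.
-/

open MeasureTheory Filter Topology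

noncomputable def bregmanDiv (b b' : ℝ → ℝ) (θ θ' : ℝ) : ℝ := b θ' - b θ - b' θ * (θ' - θ)

lemma strictMonoOn_of_hasDerivAt_pos {D : Set ℝ} {f f' : ℝ → ℝ} (hD : Convex ℝ D)
    (hf : ∀ x ∈ D, HasDerivAt f (f' x) x) (hf' : ∀ x ∈ D, 0 < f' x) : StrictMonoOn f D :=
  strictMonoOn_of_deriv_pos hD (fun x hx => (hf x hx).continuousAt.continuousWithinAt)
    fun x hx => (hf x (interior_subset hx)).deriv ▸ hf' x (interior_subset hx)

section Bregman

variable {Θ : Set ℝ} {b b' : ℝ → ℝ} {θ θ₁ θ₂ θ' : ℝ}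

lemma StrictMonoOn.strictConvexOn_of_hasDerivAt (hmono : StrictMonoOn b' Θ) (hΘ : Convex ℝ Θ)
    (hder : ∀ θ ∈ Θ, HasDerivAt b (b' θ) θ) : StrictConvexOn ℝ Θ b :=
  StrictMonoOn.strictConvexOn_of_deriv hΘ
    (fun θ hθ => (hder θ hθ).continuousAt.continuousWithinAt)
    ((hmono.mono interior_subset).congr fun θ hθ => (hder θ (interior_subset hθ)).deriv.symm)

lemma ConvexOn.monotoneOn_of_hasDerivAt (hb : ConvexOn ℝ Θ b)
    (hder : ∀ θ ∈ Θ, HasDerivAt b (b' θ) θ) : MonotoneOn b' Θ := by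
  intro x hx y hy hxy
  simpa only [(hder x hx).deriv, (hder y hy).deriv] using
    hb.monotoneOn_deriv (fun θ hθ => (hder θ hθ).differentiableAt) hx hy hxy

lemma bregmanDiv_nonneg (hb : ConvexOn ℝ Θ b) (hbθ : HasDerivAt b (b' θ) θ) (hθ : θ ∈ Θ)
    (hθ' : θ' ∈ Θ) : 0 ≤ bregmanDiv b b' θ θ' := by
  unfold bregmanDiv
  rcases lt_trichotomy θ θ' with h | rfl | h
  · have := hb.le_slope_of_hasDerivAt hθ hθ' h hbθ
    rw [slope_def_field, le_div_iff₀ (sub_pos.2 h)] at this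
    linarith
  · simp
  · have := hb.slope_le_of_hasDerivAt hθ' hθ h hbθ
    rw [slope_def_field, div_le_iff₀ (sub_pos.2 h)] at this
    linarith

lemma bregmanDiv_pos (hb : StrictConvexOn ℝ Θ b) (hbθ : HasDerivAt b (b' θ) θ) (hθ : θ ∈ Θ)
    (hθ' : θ' ∈ Θ) (hne : θ ≠ θ') : 0 < bregmanDiv b b' θ θ' := by
  unfold bregmanDiv
  rcases hne.lt_or_gt with h | h
  · have := hb.lt_slope_of_hasDerivAt hθ hθ' h hbθ
    rw [slope_def_field, lt_div_iff₀ (sub_pos.2 h)] at this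
    linarith
  · have := hb.slope_lt_of_hasDerivAt hθ' hθ h hbθ
    rw [slope_def_field, div_lt_iff₀ (sub_pos.2 h)] at this
    linarith

lemma bregmanDiv_three_point (b b' : ℝ → ℝ) (θ θ₁ θ' : ℝ) :
    bregmanDiv b b' θ θ₁ + bregmanDiv b b' θ₁ θ' + (b' θ₁ - b' θ) * (θ' - θ₁) =
      bregmanDiv b b' θ θ' := by
  unfold bregmanDiv; ring

lemma bregmanDiv_le_bregmanDiv_left (hb : ConvexOn ℝ Θ b)
    (hder : ∀ θ ∈ Θ, HasDerivAt b (b' θ) θ)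
    (hθ : θ ∈ Θ) (hθ₁ : θ₁ ∈ Θ) (h : θ ≤ θ₁) (h' : θ₁ ≤ θ') :
    bregmanDiv b b' θ₁ θ' ≤ bregmanDiv b b' θ θ' := by
  rw [← bregmanDiv_three_point b b' θ θ₁ θ']
  have := bregmanDiv_nonneg hb (hder θ hθ) hθ hθ₁
  have := mul_nonneg (sub_nonneg.2 (hb.monotoneOn_of_hasDerivAt hder hθ hθ₁ h)) (sub_nonneg.2 h')
  linarith

lemma bregmanDiv_le_bregmanDiv_right (hb : ConvexOn ℝ Θ b)
    (hder : ∀ θ ∈ Θ, HasDerivAt b (b' θ) θ)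
    (hθ : θ ∈ Θ) (hθ₁ : θ₁ ∈ Θ) (hθ' : θ' ∈ Θ) (h : θ ≤ θ₁) (h' : θ₁ ≤ θ') :
    bregmanDiv b b' θ θ₁ ≤ bregmanDiv b b' θ θ' := by
  rw [← bregmanDiv_three_point b b' θ θ₁ θ']
  have := bregmanDiv_nonneg hb (hder θ₁ hθ₁) hθ₁ hθ'
  have := mul_nonneg (sub_nonneg.2 (hb.monotoneOn_of_hasDerivAt hder hθ hθ₁ h)) (sub_nonneg.2 h')
  linarith

lemma bregmanDiv_le_bregmanDiv (hb : ConvexOn ℝ Θ b)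
    (hder : ∀ θ ∈ Θ, HasDerivAt b (b' θ) θ)
    (hθ : θ ∈ Θ) (hθ₁ : θ₁ ∈ Θ) (hθ₂ : θ₂ ∈ Θ) (hθ' : θ' ∈ Θ)
    (h₁ : θ ≤ θ₁) (h₂ : θ₁ ≤ θ₂) (h₃ : θ₂ ≤ θ') :
    bregmanDiv b b' θ₁ θ₂ ≤ bregmanDiv b b' θ θ' :=
  (bregmanDiv_le_bregmanDiv_right hb hder hθ₁ hθ₂ hθ' h₂ h₃).trans
    (bregmanDiv_le_bregmanDiv_left hb hder hθ hθ₁ h₁ (h₂.trans h₃))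

lemma tendsto_bregmanDiv {α : Type*} {l : Filter α} {u v : α → ℝ} (hu : Tendsto u l (𝓝 θ))
    (hv : Tendsto v l (𝓝 θ')) (hbθ : ContinuousAt b θ) (hb'θ : ContinuousAt b' θ)
    (hbθ' : ContinuousAt b θ') :
    Tendsto (fun t => bregmanDiv b b' (u t) (v t)) l (𝓝 (bregmanDiv b b' θ θ')) :=
  ((hbθ'.tendsto.comp hv).sub (hbθ.tendsto.comp hu)).sub ((hb'θ.tendsto.comp hu).mul (hv.sub hu))

lemma exists_lt_bregmanDiv_add_sub {c : ℝ} (hbθ : ContinuousAt b θ) (hb'θ : ContinuousAt b' θ)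
    (hbθ' : ContinuousAt b θ') (hθθ' : θ < θ') (hc : c < bregmanDiv b b' θ θ') :
    ∃ t > 0, θ + t ≤ θ' - t ∧ c < bregmanDiv b b' (θ + t) (θ' - t) := by
  have hu : Tendsto (θ + ·) (𝓝[>] 0) (𝓝 θ) :=
    tendsto_nhdsWithin_of_tendsto_nhds ((continuous_const_add θ).tendsto' 0 θ (add_zero θ))
  have hv : Tendsto (θ' - ·) (𝓝[>] 0) (𝓝 θ') :=
    tendsto_nhdsWithin_of_tendsto_nhds ((continuous_sub_left θ').tendsto' 0 θ' (sub_zero θ'))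
  have hsmall : ∀ᶠ t in 𝓝[>] (0 : ℝ), θ + t ≤ θ' - t :=
    ((eventually_lt_nhds (half_pos (sub_pos.2 hθθ'))).filter_mono nhdsWithin_le_nhds).mono
      fun t ht => by linarith
  exact (eventually_mem_nhdsWithin.and
    (hsmall.and ((tendsto_bregmanDiv hu hv hbθ hb'θ hbθ').eventually_const_lt hc))).exists

end Bregman

section MeanParameter

variable {Θ J : Set ℝ} {b b' binv : ℝ → ℝ}

lemma StrictMonoOn.monotoneOn_of_rightInvOn (hmono : StrictMonoOn b' Θ)
    (hbinv : ∀ x ∈ J, binv x ∈ Θ ∧ b' (binv x) = x) : MonotoneOn binv J := by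
  intro x hx y hy hxy
  rwa [← hmono.le_iff_le (hbinv x hx).1 (hbinv y hy).1, (hbinv x hx).2, (hbinv y hy).2]

lemma bregmanDiv_binv_pos (hb : StrictConvexOn ℝ Θ b) (hder : ∀ θ ∈ Θ, HasDerivAt b (b' θ) θ)
    (hbinv : ∀ x ∈ J, binv x ∈ Θ ∧ b' (binv x) = x) {x y : ℝ} (hx : x ∈ J) (hy : y ∈ J)
    (hxy : x ≠ y) : 0 < bregmanDiv b b' (binv x) (binv y) :=
  bregmanDiv_pos hb (hder _ (hbinv x hx).1) (hbinv x hx).1 (hbinv y hy).1 fun h =>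
    hxy (by rw [← (hbinv x hx).2, h, (hbinv y hy).2])

lemma bregmanDiv_binv_le_bregmanDiv_binv (hb : ConvexOn ℝ Θ b)
    (hder : ∀ θ ∈ Θ, HasDerivAt b (b' θ) θ) (hmono : StrictMonoOn b' Θ)
    (hbinv : ∀ x ∈ J, binv x ∈ Θ ∧ b' (binv x) = x) {x x' y' y : ℝ} (hx : x ∈ J) (hx' : x' ∈ J)
    (hy' : y' ∈ J) (hy : y ∈ J) (h₁ : x ≤ x') (h₂ : x' ≤ y') (h₃ : y' ≤ y) :
    bregmanDiv b b' (binv x') (binv y') ≤ bregmanDiv b b' (binv x) (binv y) :=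
  have hbinv_mono := hmono.monotoneOn_of_rightInvOn hbinv
  bregmanDiv_le_bregmanDiv hb hder (hbinv x hx).1 (hbinv x' hx').1 (hbinv y' hy').1 (hbinv y hy).1
    (hbinv_mono hx hx' h₁) (hbinv_mono hx' hy' h₂) (hbinv_mono hy' hy h₃)

lemma le_or_le_of_mul_dplus_le (hb : ConvexOn ℝ Θ b) (hder : ∀ θ ∈ Θ, HasDerivAt b (b' θ) θ)
    (hmono : StrictMonoOn b' Θ) (hJ : J.OrdConnected)
    (hbinv : ∀ x ∈ J, binv x ∈ Θ ∧ b' (binv x) = x) {μ₀ x y' y m s F : ℝ} (hμ₀ : μ₀ ∈ J)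
    (hx : x ∈ J) (hy' : y' ∈ J) (hy : y ∈ J) (hxy' : x ≤ y') (hy'y : y' ≤ y) (hs : 0 ≤ s)
    (hF : F < s * bregmanDiv b b' (binv x) (binv y'))
    (h : s * (if m < y then bregmanDiv b b' (binv m) (binv y) else 0) ≤ F) :
    m ≤ μ₀ ∨ x ≤ m := by
  by_contra! hm
  have hmy : m < y := by linarith
  have hmJ : m ∈ J := hJ.out hμ₀ hy ⟨hm.1.le, hmy.le⟩
  rw [if_pos hmy] at h
  have := mul_le_mul_of_nonneg_left
    (bregmanDiv_binv_le_bregmanDiv_binv hb hder hmono hbinv hmJ hx hy' hy hm.2.le hxy' hy'y) hs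
  linarith

lemma measureReal_mul_dplus_le_le {Ω : Type*} [MeasurableSpace Ω] (P : Measure Ω)
    [IsFiniteMeasure P] (X : Ω → ℝ) (hb : ConvexOn ℝ Θ b)
    (hder : ∀ θ ∈ Θ, HasDerivAt b (b' θ) θ) (hmono : StrictMonoOn b' Θ) (hJ : J.OrdConnected)
    (hbinv : ∀ x ∈ J, binv x ∈ Θ ∧ b' (binv x) = x) {μ₀ x y' y s F : ℝ} (hμ₀ : μ₀ ∈ J)
    (hx : x ∈ J) (hy' : y' ∈ J) (hy : y ∈ J) (hxy' : x ≤ y') (hy'y : y' ≤ y) (hs : 0 ≤ s)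
    (hF : F < s * bregmanDiv b b' (binv x) (binv y')) :
    P.real {ω | s * (if X ω < y then bregmanDiv b b' (binv (X ω)) (binv y) else 0) ≤ F} ≤
      P.real {ω | X ω ≤ μ₀} + P.real {ω | x ≤ X ω} :=
  (measureReal_mono fun _ hω => le_or_le_of_mul_dplus_le hb hder hmono hJ hbinv hμ₀ hx hy' hy
    hxy' hy'y hs hF hω).trans (measureReal_union_le _ _)

lemma exists_margins_lt_bregmanDiv_binv (hΘ : IsOpen Θ) (hΘc : Convex ℝ Θ)
    (hder : ∀ θ ∈ Θ, HasDerivAt b (b' θ) θ) (hb'cont : ∀ θ ∈ Θ, ContinuousAt b' θ)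
    (hmono : StrictMonoOn b' Θ) (hJ : J = b' '' Θ)
    (hbinv : ∀ x ∈ J, binv x ∈ Θ ∧ b' (binv x) = x) {μ μ' c : ℝ} (hμ : μ ∈ J) (hμ' : μ' ∈ J)
    (hμμ' : μ < μ') (hc : c < bregmanDiv b b' (binv μ) (binv μ')) :
    ∃ x ∈ J, ∃ y ∈ J, ∃ z ∈ J, μ < x ∧ x ≤ y ∧ y < μ' ∧ μ' < z ∧
      c < bregmanDiv b b' (binv x) (binv y) := by
  obtain ⟨hθ, hbθ⟩ := hbinv μ hμ
  obtain ⟨hθ', hbθ'⟩ := hbinv μ' hμ'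
  have hθθ' : binv μ < binv μ' := (hmono.lt_iff_lt hθ hθ').1 (by rwa [hbθ, hbθ'])
  obtain ⟨t, ht, htt, hct⟩ := exists_lt_bregmanDiv_add_sub (hder _ hθ).continuousAt
    (hb'cont _ hθ) (hder _ hθ').continuousAt hθθ' hc
  obtain ⟨θz, hθz, hθ'z⟩ : ∃ θ ∈ Θ, binv μ' < θ :=
    (((hΘ.eventually_mem hθ').filter_mono nhdsWithin_le_nhds).and
      (eventually_mem_nhdsWithin (s := Set.Ioi _))).exists
  have hθx : binv μ + t ∈ Θ := hΘc.ordConnected.out hθ hθ' ⟨by linarith, by linarith⟩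
  have hθy : binv μ' - t ∈ Θ := hΘc.ordConnected.out hθ hθ' ⟨by linarith, by linarith⟩
  have hmemJ : ∀ θ ∈ Θ, b' θ ∈ J := fun θ hθ => hJ ▸ Set.mem_image_of_mem b' hθ
  have hbinv_b' : ∀ θ ∈ Θ, binv (b' θ) = θ := fun θ hθ =>
    hmono.injOn (hbinv _ (hmemJ θ hθ)).1 hθ (hbinv _ (hmemJ θ hθ)).2
  refine ⟨_, hmemJ _ hθx, _, hmemJ _ hθy, _, hmemJ _ hθz,
    hbθ.symm.trans_lt (hmono hθ hθx (by linarith)), hmono.monotoneOn hθx hθy htt,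
    (hmono hθy hθ' (by linarith)).trans_eq hbθ',
    hbθ'.symm.trans_lt (hmono hθ' hθz hθ'z),
    by rwa [hbinv_b' _ hθx, hbinv_b' _ hθy]⟩

end MeanParameter

section Counting

open Finset

lemma sum_Icc_le_add_sum_of_le_one {p r : ℕ → ℝ} {M T : ℕ} (hp : ∀ s ∈ Icc 1 T, p s ≤ 1)
    (hr : ∀ s, 0 ≤ r s) (hpr : ∀ s ∈ Icc 1 T, M < s → p s ≤ r s) :
    ∑ s ∈ Icc 1 T, p s ≤ M + ∑ s ∈ Icc 1 T, r s := by
  have hcard : #{s ∈ Icc 1 T | s ≤ M} ≤ #(Icc 1 M) :=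
    card_le_card fun s hs => by simp only [mem_filter, mem_Icc] at hs ⊢; exact ⟨hs.1.1, hs.2⟩
  rw [Nat.card_Icc, Nat.add_sub_cancel] at hcard
  calc ∑ s ∈ Icc 1 T, p s ≤ ∑ s ∈ Icc 1 T, ((if s ≤ M then 1 else 0) + r s) := by
        refine sum_le_sum fun s hs => ?_
        split_ifs with hsM
        · linarith [hp s hs, hr s]
        · simpa using hpr s hs (not_le.1 hsM)
    _ = #{s ∈ Icc 1 T | s ≤ M} + ∑ s ∈ Icc 1 T, r s := by rw [sum_add_distrib, sum_boole]
    _ ≤ M + ∑ s ∈ Icc 1 T, r s := by gcongr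

lemma sum_Icc_pow_le {q : ℝ} (hq : 0 ≤ q) (hq' : q < 1) (T : ℕ) :
    ∑ s ∈ Icc 1 T, q ^ s ≤ q / (1 - q) := by
  simpa [← Ico_add_one_right_eq_Icc] using geom_sum_Ico_le_of_lt_one (m := 1) (n := T + 1) hq hq'

lemma sum_Icc_le_div_add_of_le_geom {p : ℕ → ℝ} {q₁ q₂ κ F : ℝ} {s₀ T : ℕ} (hκ : 0 < κ)
    (hF : 0 ≤ F) (hq₁ : 0 ≤ q₁) (hq₁' : q₁ < 1) (hq₂ : 0 ≤ q₂) (hq₂' : q₂ < 1)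
    (hp : ∀ s ∈ Icc 1 T, p s ≤ 1)
    (htail : ∀ s, 1 ≤ s → s₀ ≤ s → F < s * κ → p s ≤ q₁ ^ s + q₂ ^ s) :
    ∑ s ∈ Icc 1 T, p s ≤ F / κ + (s₀ + q₁ / (1 - q₁) + q₂ / (1 - q₂)) := by
  set M := max s₀ ⌊F / κ⌋₊
  have hM : (M : ℝ) ≤ s₀ + F / κ := by
    rcases max_choice s₀ ⌊F / κ⌋₊ with h | h <;> simp only [M, h]
    · linarith [div_nonneg hF hκ.le]
    · linarith [Nat.floor_le (div_nonneg hF hκ.le), (Nat.cast_nonneg s₀ : (0 : ℝ) ≤ s₀)]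
  have hsum := sum_Icc_le_add_sum_of_le_one (M := M) (r := fun s => q₁ ^ s + q₂ ^ s) hp
    (fun s => by positivity) fun s hs hMs => htail s (mem_Icc.1 hs).1 (max_lt_iff.1 hMs).1.le
      ((div_lt_iff₀ hκ).1 ((Nat.floor_lt (div_nonneg hF hκ.le)).1 (max_lt_iff.1 hMs).2))
  rw [sum_add_distrib] at hsum
  linarith [sum_Icc_pow_le hq₁ hq₁' T, sum_Icc_pow_le hq₂ hq₂' T]

end Counting

open scoped Classical in
theorem bad_rounds_lemma_general
    {Ω : Type*} [MeasurableSpace Ω] (P : Measure Ω) [IsProbabilityMeasure P]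
    (Θ J : Set ℝ) (hΘ : IsOpen Θ) (hΘconv : Convex ℝ Θ)
    (b b' b'' binv : ℝ → ℝ)
    (hb' : ∀ θ ∈ Θ, HasDerivAt b (b' θ) θ)
    (hb'' : ∀ θ ∈ Θ, HasDerivAt b' (b'' θ) θ)
    (hpos : ∀ θ ∈ Θ, 0 < b'' θ)
    (hJ : J = b' '' Θ)
    (hbinv : ∀ x ∈ J, binv x ∈ Θ ∧ b' (binv x) = x)
    (d : ℝ → ℝ → ℝ)
    (hd : ∀ x y, d x y = b' (binv x) * (binv x - binv y) - b (binv x) + b (binv y))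
    (μ₀m μa μ1 : ℝ) (hμ₀m : μ₀m ∈ J) (hμa : μa ∈ J) (hμ1 : μ1 ∈ J)
    (h0a : μ₀m < μa) (ha1 : μa < μ1)
    -- `Y i` are the successive i.i.d. rewards from arm `a`, with mean `μa`, for
    -- which the Chernoff bounds hold:
    (Y : ℕ → Ω → ℝ)
    (hChernoffUp : ∀ s : ℕ, 1 ≤ s → ∀ x, μa < x → x ∈ J →
      (P {ω | x ≤ (∑ i ∈ Finset.range s, Y i ω) / s}).toReal
        ≤ Real.exp (-(s : ℝ) * d x μa))
    (hChernoffLow : ∀ s : ℕ, 1 ≤ s → ∀ x, x < μa → x ∈ J →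
      (P {ω | (∑ i ∈ Finset.range s, Y i ω) / s ≤ x}).toReal
        ≤ Real.exp (-(s : ℝ) * d x μa))
    (f g h : ℕ → ℝ)
    (hf : Tendsto f atTop atTop)
    (hg : Tendsto g atTop (nhds 0))
    (hh : Tendsto (fun s : ℕ => h s / s) atTop (nhds 0)) :
    ∀ ε > 0, ∃ (N : ℕ) (C₁ C₂ : ℝ), ∀ T : ℕ, N ≤ T →
      (∑ s ∈ Finset.Icc 1 T,
        (P {ω | (s : ℝ) *
            (if (∑ i ∈ Finset.range s, Y i ω) / s < μ1 - g s
             then d ((∑ i ∈ Finset.range s, Y i ω) / s) (μ1 - g s) else 0)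
          ≤ f T + h s}).toReal)
      ≤ (1 + ε) * f T / d μa μ1 + C₁ * Real.sqrt (f T) + C₂ := by
  intro ε hε
  have hmono : StrictMonoOn b' Θ := strictMonoOn_of_hasDerivAt_pos hΘconv hb'' hpos
  have hconv : StrictConvexOn ℝ Θ b := hmono.strictConvexOn_of_hasDerivAt hΘconv hb'
  have hJconn : J.OrdConnected := hJ ▸ (hΘconv.isPreconnected.image b' fun θ hθ =>
    (hb'' θ hθ).continuousAt.continuousWithinAt).ordConnected
  obtain rfl : d = fun x y => bregmanDiv b b' (binv x) (binv y) := by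
    funext x y; rw [hd, bregmanDiv]; ring
  have hd₁ := bregmanDiv_binv_pos hconv hb' hbinv hμa hμ1 ha1.ne
  obtain ⟨x, hx, y, hy, z, hz, hax, hxy, hy1, h1z, hκ⟩ := exists_margins_lt_bregmanDiv_binv hΘ
    hΘconv hb' (fun θ hθ => (hb'' θ hθ).continuousAt) hmono hJ hbinv hμa hμ1 ha1
    (div_lt_self hd₁ (lt_add_of_pos_right 1 hε))
  obtain ⟨s₀, hs₀⟩ := eventually_atTop.1 <|
    ((by simpa using hg.const_sub μ1 : Tendsto (fun s => μ1 - g s) atTop (𝓝 μ1)).eventually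
      (Ioo_mem_nhds hy1 h1z)).and (hh.eventually (gt_mem_nhds (sub_pos.2 hκ)))
  set q₁ := Real.exp (-bregmanDiv b b' (binv μ₀m) (binv μa))
  set q₂ := Real.exp (-bregmanDiv b b' (binv x) (binv μa))
  have hq₁ : q₁ < 1 := Real.exp_lt_one_iff.2 <| neg_lt_zero.2 <|
    bregmanDiv_binv_pos hconv hb' hbinv hμ₀m hμa h0a.ne
  have hq₂ : q₂ < 1 := Real.exp_lt_one_iff.2 <| neg_lt_zero.2 <|
    bregmanDiv_binv_pos hconv hb' hbinv hx hμa hax.ne'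
  obtain ⟨N, hN⟩ := eventually_atTop.1 (hf.eventually_ge_atTop 0)
  refine ⟨N, 0, s₀ + q₁ / (1 - q₁) + q₂ / (1 - q₂), fun T hT => ?_⟩
  calc _ ≤ f T / (bregmanDiv b b' (binv μa) (binv μ1) / (1 + ε)) +
        (s₀ + q₁ / (1 - q₁) + q₂ / (1 - q₂)) :=
        sum_Icc_le_div_add_of_le_geom (by positivity) (hN T hT) (Real.exp_nonneg _) hq₁
          (Real.exp_nonneg _) hq₂ (fun _ _ => measureReal_le_one) fun s hs1 hs₀s hsκ => ?_
    _ = _ := by field_simp; ring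
  obtain ⟨hgs, hhs⟩ := hs₀ s hs₀s
  have hs : (0 : ℝ) < s := Nat.cast_pos.2 hs1
  refine (measureReal_mul_dplus_le_le P _ hconv.convexOn hb' hmono hJconn hbinv hμ₀m hx hy
    (hJconn.out hy hz (Set.Ioo_subset_Icc_self hgs)) hxy hgs.1.le hs.le
    (by linarith [(div_lt_iff₀ hs).1 hhs])).trans <|
    (add_le_add (hChernoffLow s hs1 μ₀m h0a hμ₀m) (hChernoffUp s hs1 x hax hx)).trans_eq ?_
  simp only [q₁, q₂, ← Real.exp_nat_mul]
  ring_nf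

open scoped Classical in
/-- Lemma on the number of 'bad' rounds for a suboptimal arm: if
`f(T) → ∞`, `g(s) → 0`, `h(s)/s → 0` (with `g` and `h(s)/s` eventually
non-increasing), then for every `ε > 0` and all `T` large enough,
`∑_{s=1}^T P(s d⁺(μ̂_{a,s}, μ₁ - g(s)) ≤ f(T) + h(s))
  ≤ (1+ε) f(T)/d(μ_a, μ₁) + C₁ √(f T) + C₂`. -/
theorem bad_rounds_lemma
    {Ω : Type*} [MeasurableSpace Ω] (P : Measure Ω) [IsProbabilityMeasure P]
    (Θ J : Set ℝ) (hΘ : IsOpen Θ) (hΘconv : Convex ℝ Θ)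
    (b b' b'' binv : ℝ → ℝ)
    (hb' : ∀ θ ∈ Θ, HasDerivAt b (b' θ) θ)
    (hb'' : ∀ θ ∈ Θ, HasDerivAt b' (b'' θ) θ)
    (hpos : ∀ θ ∈ Θ, 0 < b'' θ)
    (hJ : J = b' '' Θ)
    (hbinv : ∀ x ∈ J, binv x ∈ Θ ∧ b' (binv x) = x)
    (d : ℝ → ℝ → ℝ)
    (hd : ∀ x y, d x y = b' (binv x) * (binv x - binv y) - b (binv x) + b (binv y))
    (μ₀m μa μ1 : ℝ) (hμ₀m : μ₀m ∈ J) (hμa : μa ∈ J) (hμ1 : μ1 ∈ J)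
    (h0a : μ₀m < μa) (ha1 : μa < μ1)
    -- `Y i` are the successive i.i.d. rewards from arm `a`, with mean `μa`, for
    -- which the Chernoff bounds hold:
    (Y : ℕ → Ω → ℝ)
    (hChernoffUp : ∀ s : ℕ, 1 ≤ s → ∀ x, μa < x → x ∈ J →
      (P {ω | x ≤ (∑ i ∈ Finset.range s, Y i ω) / s}).toReal
        ≤ Real.exp (-(s : ℝ) * d x μa))
    (hChernoffLow : ∀ s : ℕ, 1 ≤ s → ∀ x, x < μa → x ∈ J →
      (P {ω | (∑ i ∈ Finset.range s, Y i ω) / s ≤ x}).toReal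
        ≤ Real.exp (-(s : ℝ) * d x μa))
    (f g h : ℕ → ℝ)
    (hf : Tendsto f atTop atTop)
    (hg : Tendsto g atTop (nhds 0))
    (hh : Tendsto (fun s : ℕ => h s / s) atTop (nhds 0))
    (hgmono : ∃ s₀ : ℕ, AntitoneOn g (Set.Ici s₀))
    (hhmono : ∃ s₀ : ℕ, AntitoneOn (fun s : ℕ => h s / s) (Set.Ici s₀)) :
    ∀ ε > 0, ∃ (N : ℕ) (C₁ C₂ : ℝ), ∀ T : ℕ, N ≤ T →
      (∑ s ∈ Finset.Icc 1 T,
        (P {ω | (s : ℝ) *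
            (if (∑ i ∈ Finset.range s, Y i ω) / s < μ1 - g s
             then d ((∑ i ∈ Finset.range s, Y i ω) / s) (μ1 - g s) else 0)
          ≤ f T + h s}).toReal)
      ≤ (1 + ε) * f T / d μa μ1 + C₁ * Real.sqrt (f T) + C₂ :=
  bad_rounds_lemma_general P Θ J hΘ hΘconv b b' b'' binv hb' hb'' hpos hJ hbinv d hd μ₀m μa μ1 hμ₀m
    hμa hμ1 h0a ha1 Y hChernoffUp hChernoffLow f g h hf hg hh
end

section
/- (Local comparison lemma for the Bayes risk lower bound) Let b be the log-partition function of an exponential family, h a positive continuous density on Θ, B = [b⁻, b⁺] a compact subset of Θ, γ ∈ (0,1), and ζ ∈ (0,1) such that (1+ζ)² = (1-γ/2)/(1-γ). Then there exists u₀ > 0 such that for all θ ∈ B and all 0 < u ≤ u₀: (ḃ(θ) - ḃ(θ-u))·h(θ-u) / K(θ-u, θ+ζu) ≥ (1-γ)·2h(θ)/u. -/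
/-!
By the mean value theorem `ḃ(θ) - ḃ(θ - u) = b̈(ξ) u`, and by Taylor's theorem with Lagrange
remainder `K(θ - u, θ + ζu) = b̈(c) (1 + ζ)² u² / 2`, where `ξ, c` lie within `(1 + ζ) u < 2u` of
each other. The inequality thus reduces to `(1 - γ/2) b̈(c) h(θ) ≤ b̈(ξ) h(θ - u)`, and since
`1 - γ/2 ≤ (1 - γ/4)²` it suffices that `b̈` and `h` each lose at most a factor `1 - γ/4` over
distances `< 2u`. This holds for small `u` because both are positive and uniformly continuous on a
compact neighbourhood of `B` inside `Θ`.
-/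

open Set Metric

theorem exists_taylor_mean_remainder_lagrange_two {f f' f'' : ℝ → ℝ} {a b : ℝ} (hab : a < b)
    (hf : ∀ x ∈ Icc a b, HasDerivAt f (f' x) x) (hf' : ∀ x ∈ Icc a b, HasDerivAt f' (f'' x) x) :
    ∃ c ∈ Ioo a b, f b - f a - f' a * (b - a) = f'' c * (b - a) ^ 2 / 2 := by
  -- Cauchy's mean value theorem for `t ↦ f t - f' a * t` against `t ↦ (t - a) ^ 2`
  obtain ⟨c, hc, hcauchy⟩ := exists_ratio_hasDerivAt_eq_ratio_slope
    (fun t => f t - f' a * t) (fun x => f' x - f' a) hab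
    ((HasDerivAt.continuousOn hf).sub (continuousOn_const.mul continuousOn_id))
    (fun x hx => ((hf x (Ioo_subset_Icc_self hx)).sub
      ((hasDerivAt_id x).const_mul (f' a))).congr_deriv (by ring))
    (fun t => (t - a) ^ 2) (fun x => 2 * (x - a)) (by fun_prop)
    (fun x _ => (((hasDerivAt_id x).sub_const a).pow 2).congr_deriv (by simp))
  have hsub : Icc a c ⊆ Icc a b := Icc_subset_Icc_right hc.2.le
  obtain ⟨d, hd, hslope⟩ := exists_hasDerivAt_eq_slope f' f'' hc.1
    ((HasDerivAt.continuousOn hf').mono hsub) (fun x hx => hf' x (hsub (Ioo_subset_Icc_self hx)))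
  refine ⟨d, ⟨hd.1, hd.2.trans hc.2⟩, ?_⟩
  rw [hslope]
  have hca : c - a ≠ 0 := sub_ne_zero.2 hc.1.ne'
  field_simp
  linear_combination (-1) * hcauchy

theorem IsCompact.exists_forall_dist_lt_one_sub_mul_le {X : Type*} [PseudoMetricSpace X]
    {S : Set X} (hS : IsCompact S) {f : X → ℝ} (hf : ContinuousOn f S)
    (hpos : ∀ x ∈ S, 0 < f x) {ε : ℝ} (hε : 0 < ε) :
    ∃ δ > 0, ∀ x ∈ S, ∀ y ∈ S, dist x y < δ → (1 - ε) * f x ≤ f y := by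
  rcases S.eq_empty_or_nonempty with rfl | hne
  · exact ⟨1, one_pos, by simp⟩
  obtain ⟨x₀, hx₀, hmin⟩ := hS.exists_isMinOn hne hf
  obtain ⟨δ, hδ, hclose⟩ := Metric.uniformContinuousOn_iff.1
    (hS.uniformContinuousOn_of_continuous hf) (ε * f x₀) (mul_pos hε (hpos x₀ hx₀))
  refine ⟨δ, hδ, fun x hx y hy hxy => ?_⟩
  have hfxy := hclose x hx y hy hxy
  rw [Real.dist_eq, abs_sub_lt_iff] at hfxy
  have : f x₀ ≤ f x := hmin hx
  nlinarith

theorem one_sub_mul_two_mul_div_le_of_le {γ ζ u B₁ B₂ H₀ H₁ : ℝ} (hγ : γ ≤ 4) (hζ : 0 ≤ ζ)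
    (hu : 0 < u) (hB₂ : 0 < B₂) (hH₀ : 0 ≤ H₀) (hζγ : (1 - γ) * (1 + ζ) ^ 2 = 1 - γ / 2)
    (hB : (1 - γ / 4) * B₂ ≤ B₁) (hH : (1 - γ / 4) * H₀ ≤ H₁) :
    (1 - γ) * (2 * H₀ / u) ≤ B₁ * u * H₁ / (B₂ * ((1 + ζ) * u) ^ 2 / 2) := by
  have hprod : (1 - γ / 4) ^ 2 * (B₂ * H₀) ≤ B₁ * H₁ :=
    calc (1 - γ / 4) ^ 2 * (B₂ * H₀) = ((1 - γ / 4) * B₂) * ((1 - γ / 4) * H₀) := by ring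
      _ ≤ B₁ * H₁ := mul_le_mul hB hH (by nlinarith) (by nlinarith)
  have hkey : (1 - γ) * (1 + ζ) ^ 2 * (B₂ * H₀) ≤ B₁ * H₁ := by
    rw [hζγ]; nlinarith [mul_nonneg (sq_nonneg γ) (mul_nonneg hB₂.le hH₀)]
  rw [le_div_iff₀ (by positivity)]
  calc (1 - γ) * (2 * H₀ / u) * (B₂ * ((1 + ζ) * u) ^ 2 / 2)
      = (1 - γ) * (1 + ζ) ^ 2 * (B₂ * H₀) * u := by field_simp
    _ ≤ B₁ * H₁ * u := by gcongr
    _ = B₁ * u * H₁ := by ring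

theorem exists_slope_eq_and_taylor_eq {b b' b'' : ℝ → ℝ} {θ u ζ : ℝ} (hu : 0 < u) (hζ : 0 ≤ ζ)
    (hb' : ∀ x ∈ Icc (θ - u) (θ + ζ * u), HasDerivAt b (b' x) x)
    (hb'' : ∀ x ∈ Icc (θ - u) (θ + ζ * u), HasDerivAt b' (b'' x) x) :
    ∃ ξ ∈ Icc (θ - u) θ, ∃ c ∈ Icc (θ - u) (θ + ζ * u),
      b' θ - b' (θ - u) = b'' ξ * u ∧
      b' (θ - u) * ((θ - u) - (θ + ζ * u)) - b (θ - u) + b (θ + ζ * u)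
        = b'' c * ((1 + ζ) * u) ^ 2 / 2 := by
  have hsub : Icc (θ - u) θ ⊆ Icc (θ - u) (θ + ζ * u) :=
    Icc_subset_Icc_right (le_add_of_nonneg_right (mul_nonneg hζ hu.le))
  obtain ⟨ξ, hξ, hslope⟩ := exists_hasDerivAt_eq_slope b' b'' (sub_lt_self θ hu)
    (HasDerivAt.continuousOn fun x hx => hb'' x (hsub hx))
    (fun x hx => hb'' x (hsub (Ioo_subset_Icc_self hx)))
  obtain ⟨c, hc, htaylor⟩ := exists_taylor_mean_remainder_lagrange_two (by nlinarith : θ - u < θ + ζ * u) hb' hb''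
  refine ⟨ξ, Ioo_subset_Icc_self hξ, c, Ioo_subset_Icc_self hc, ?_, ?_⟩
  · rw [hslope, sub_sub_cancel, div_mul_cancel₀ _ hu.ne']
  · rw [show (1 + ζ) * u = θ + ζ * u - (θ - u) by ring, ← htaylor]
    ring

theorem bayes_risk_local_comparison_general
    (Θ : Set ℝ) (hΘ : IsOpen Θ)
    (b b' b'' : ℝ → ℝ)
    (hb' : ∀ θ ∈ Θ, HasDerivAt b (b' θ) θ)
    (hb'' : ∀ θ ∈ Θ, HasDerivAt b' (b'' θ) θ)
    (hpos : ∀ θ ∈ Θ, 0 < b'' θ)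
    (hb''cont : ContinuousOn b'' Θ)
    (h : ℝ → ℝ) (hhc : ContinuousOn h Θ) (hhpos : ∀ θ ∈ Θ, 0 < h θ)
    (bm bp : ℝ) (hB : Set.Icc bm bp ⊆ Θ)
    (γ ζ : ℝ) (hγ : γ ∈ Set.Ioo (0 : ℝ) 1) (hζ : ζ ∈ Set.Ioo (0 : ℝ) 1)
    (hζγ : (1 + ζ) ^ 2 = (1 - γ / 2) / (1 - γ)) :
    ∃ u₀ > 0, ∀ θ ∈ Set.Icc bm bp, ∀ u : ℝ, 0 < u → u ≤ u₀ →
      (1 - γ) * (2 * h θ / u)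
        ≤ (b' θ - b' (θ - u)) * h (θ - u) /
            (b' (θ - u) * ((θ - u) - (θ + ζ * u)) - b (θ - u) + b (θ + ζ * u)) := by
  obtain ⟨hγ0, hγ1⟩ := hγ
  obtain ⟨hζ0, hζ1⟩ := hζ
  obtain ⟨δ, hδ, hSΘ⟩ := isCompact_Icc.exists_cthickening_subset_open hΘ hB
  have hS : IsCompact (cthickening δ (Icc bm bp)) := isCompact_Icc.cthickening
  obtain ⟨δ₁, hδ₁, hb''near⟩ := hS.exists_forall_dist_lt_one_sub_mul_le (hb''cont.mono hSΘ)
    (fun x hx => hpos x (hSΘ hx)) (by positivity : 0 < γ / 4)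
  obtain ⟨δ₂, hδ₂, hhnear⟩ := hS.exists_forall_dist_lt_one_sub_mul_le (hhc.mono hSΘ)
    (fun x hx => hhpos x (hSΘ hx)) (by positivity : 0 < γ / 4)
  refine ⟨min δ (min δ₁ δ₂) / 2, by positivity, fun θ hθ u hu hu₀ => ?_⟩
  obtain ⟨huδ, huδ₁, huδ₂⟩ : 2 * u ≤ δ ∧ 2 * u ≤ δ₁ ∧ 2 * u ≤ δ₂ := by
    simpa only [le_min_iff] using (le_div_iff₀' two_pos).1 hu₀
  have hI : Icc (θ - u) (θ + ζ * u) ⊆ cthickening δ (Icc bm bp) := fun x hx =>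
    mem_cthickening_of_dist_le x θ δ _ hθ <| by
      rw [Real.dist_eq, abs_le]
      constructor <;> nlinarith [hx.1, hx.2]
  obtain ⟨ξ, hξ, c, hc, hslope, htaylor⟩ := exists_slope_eq_and_taylor_eq hu hζ0.le
    (fun x hx => hb' x (hSΘ (hI hx))) (fun x hx => hb'' x (hSΘ (hI hx)))
  have hθI : θ ∈ Icc (θ - u) (θ + ζ * u) := ⟨by linarith, by nlinarith⟩
  rw [hslope, htaylor]
  refine one_sub_mul_two_mul_div_le_of_le (by linarith) hζ0.le hu
    (hpos c (hSΘ (hI hc))) (hhpos θ (hB hθ)).le ?_ ?_ ?_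
  · rw [hζγ]
    field_simp [(by linarith : (1 : ℝ) - γ ≠ 0)]
  · refine hb''near c (hI hc) ξ (hI ⟨hξ.1, hξ.2.trans hθI.2⟩) ?_
    rw [Real.dist_eq, abs_lt]
    constructor <;> nlinarith [hc.1, hc.2, hξ.1, hξ.2]
  · refine hhnear θ (hI hθI) (θ - u) (hI ⟨le_rfl, hθI.1.trans hθI.2⟩) ?_
    rw [Real.dist_eq, abs_lt]
    constructor <;> linarith

/-- Local comparison lemma for the Bayes risk lower bound: with
`K(θ,λ) = ḃ(θ)(θ-λ) - b(θ) + b(λ)` and `(1+ζ)² = (1-γ/2)/(1-γ)`, there exists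
`u₀ > 0` such that for all `θ ∈ B = [b⁻, b⁺]` and all `0 < u ≤ u₀`,
`(ḃ(θ) - ḃ(θ-u)) h(θ-u) / K(θ-u, θ+ζu) ≥ (1-γ) 2 h(θ)/u`. -/
theorem bayes_risk_local_comparison
    (Θ : Set ℝ) (hΘ : IsOpen Θ) (hΘconv : Convex ℝ Θ)
    (b b' b'' : ℝ → ℝ)
    (hb' : ∀ θ ∈ Θ, HasDerivAt b (b' θ) θ)
    (hb'' : ∀ θ ∈ Θ, HasDerivAt b' (b'' θ) θ)
    (hpos : ∀ θ ∈ Θ, 0 < b'' θ)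
    (hb''cont : ContinuousOn b'' Θ)
    (h : ℝ → ℝ) (hhc : ContinuousOn h Θ) (hhpos : ∀ θ ∈ Θ, 0 < h θ)
    (bm bp : ℝ) (hbmp : bm ≤ bp) (hB : Set.Icc bm bp ⊆ Θ)
    (γ ζ : ℝ) (hγ : γ ∈ Set.Ioo (0 : ℝ) 1) (hζ : ζ ∈ Set.Ioo (0 : ℝ) 1)
    (hζγ : (1 + ζ) ^ 2 = (1 - γ / 2) / (1 - γ)) :
    ∃ u₀ > 0, ∀ θ ∈ Set.Icc bm bp, ∀ u : ℝ, 0 < u → u ≤ u₀ →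
      (1 - γ) * (2 * h θ / u)
        ≤ (b' θ - b' (θ - u)) * h (θ - u) /
            (b' (θ - u) * ((θ - u) - (θ + ζ * u)) - b (θ - u) + b (θ + ζ * u)) :=
  bayes_risk_local_comparison_general Θ hΘ b b' b'' hb' hb'' hpos hb''cont h hhc hhpos bm bp hB γ ζ
    hγ hζ hζγ
end
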